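/- For ρ ∈ (0,1), λ ∈ (0,1], σ ∈ [0,1], ℓ₀ > 0: the ratio (ℓ₀/(1-ρ^{1/λ})) / (ℓ₀·(1 + σρ^{2/λ}/(1-σρ^{1/λ})) + (1-σ)ρ^{2/λ}·Δℓ/(1-(1-σ)ρ^{1/λ})) tends to (1-σρ^{1/λ})/((1-ρ^{1/λ})(1-σρ^{1/λ}+σρ^{2/λ})) ≥ (1-σρ^{1/λ})/(1-ρ^{1/λ}) · 1/(1+σρ^{2/λ}/(1-σρ^{1/λ})) as Δℓ → 0⁺; in particular this limit is at least (1-σρ^{1/λ})/(1-ρ^{1/λ}) when σρ^{2/λ} terms vanish (σ → 0) and tends to +∞ as ρ → 1⁻ and σ → 0. -/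

import Mathlib

open Real Filter Topology

/-! Writing `r = ρ^{1/λ}` and `s = ρ^{2/λ}`, the ratio is continuous in `Δℓ` at `0`, so its limit is
its value there; after cancelling `ℓ₀` this is `(1 - σr) / ((1 - r)(1 - σr + σs))`. The lower bound
is the inequality `1 - σr ≤ 1`, and the blow-up holds because `1 - p^{1/λ} → 0⁺` as `p → 1⁻`. -/

lemma tendsto_div_add_mul_div_nhdsGT_zero {a b : ℝ} (c d : ℝ) (hb : b ≠ 0) :
    Tendsto (fun x : ℝ => a / (b + c * x / d)) (𝓝[>] 0) (𝓝 (a / b)) := by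
  have hcont : ContinuousAt (fun x : ℝ => a / (b + c * x / d)) 0 :=
    continuousAt_const.div (by fun_prop) (by simpa using hb)
  simpa using hcont.tendsto.mono_left nhdsWithin_le_nhds

lemma div_div_mul_one_add_div_eq {ℓ r σ s : ℝ} (hℓ : ℓ ≠ 0) (hA : 1 - σ * r ≠ 0) :
    ℓ / (1 - r) / (ℓ * (1 + σ * s / (1 - σ * r))) =
      (1 - σ * r) / ((1 - r) * (1 - σ * r + σ * s)) := by
  rw [one_add_div hA]
  field_simp

lemma div_mul_one_div_one_add_div_le {r σ s : ℝ} (hσr : 0 ≤ σ * r) (hA : 0 < 1 - σ * r)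
    (hr : r < 1) (hB : 0 < 1 - σ * r + σ * s) :
    (1 - σ * r) / (1 - r) * (1 / (1 + σ * s / (1 - σ * r))) ≤
      (1 - σ * r) / ((1 - r) * (1 - σ * r + σ * s)) := by
  have hr' : 0 < 1 - r := sub_pos.mpr hr
  rw [one_add_div hA.ne', one_div_div, div_mul_div_comm]
  exact div_le_div_of_nonneg_right (mul_le_of_le_one_right hA.le (by linarith))
    (mul_pos hr' hB).le

lemma tendsto_one_div_one_sub_rpow_nhdsLT_one {e : ℝ} (he : 0 < e) :
    Tendsto (fun p : ℝ => 1 / (1 - p ^ e)) (𝓝[<] 1) atTop := by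
  have hgap : Tendsto (fun p : ℝ => 1 - p ^ e) (𝓝[<] 1) (𝓝[>] 0) := by
    refine tendsto_nhdsWithin_iff.mpr ⟨?_, ?_⟩
    · have hcont : ContinuousAt (fun p : ℝ => 1 - p ^ e) 1 :=
        continuousAt_const.sub (continuousAt_rpow_const 1 e (Or.inl one_ne_zero))
      simpa using hcont.tendsto.mono_left nhdsWithin_le_nhds
    · filter_upwards [Ioo_mem_nhdsLT zero_lt_one] with p hp
      exact sub_pos.mpr (rpow_lt_one hp.1.le hp.2 he)
  simpa only [one_div, Function.comp_def] using tendsto_inv_nhdsGT_zero.comp hgap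

/-- In the dynamic-Markov-chain extension, the myopic/optimal cost ratio tends
to (1-σρ^{1/λ})/((1-ρ^{1/λ})(1-σρ^{1/λ}+σρ^{2/λ})) as Δℓ → 0⁺; this limit is
at least (1-σρ^{1/λ})/(1-ρ^{1/λ}) · 1/(1+σρ^{2/λ}/(1-σρ^{1/λ})), equals
1/(1-ρ^{1/λ}) when σ = 0, and 1/(1-ρ^{1/λ}) blows up as ρ → 1⁻. -/
theorem dynamic_poa_ratio_limit (ρ lam σ ℓ0 : ℝ)
    (hρ : ρ ∈ Set.Ioo (0:ℝ) 1) (hlam : lam ∈ Set.Ioc (0:ℝ) 1)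
    (hσ : σ ∈ Set.Icc (0:ℝ) 1) (hℓ : 0 < ℓ0) :
    Tendsto
      (fun Δℓ : ℝ =>
        (ℓ0 / (1 - ρ ^ ((1:ℝ)/lam))) /
          (ℓ0 * (1 + σ * ρ ^ ((2:ℝ)/lam) / (1 - σ * ρ ^ ((1:ℝ)/lam))) +
            (1 - σ) * ρ ^ ((2:ℝ)/lam) * Δℓ / (1 - (1 - σ) * ρ ^ ((1:ℝ)/lam))))
      (nhdsWithin 0 (Set.Ioi 0))
      (nhds ((1 - σ * ρ ^ ((1:ℝ)/lam)) /
        ((1 - ρ ^ ((1:ℝ)/lam)) *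
          (1 - σ * ρ ^ ((1:ℝ)/lam) + σ * ρ ^ ((2:ℝ)/lam))))) ∧
    (1 - σ * ρ ^ ((1:ℝ)/lam)) /
        ((1 - ρ ^ ((1:ℝ)/lam)) *
          (1 - σ * ρ ^ ((1:ℝ)/lam) + σ * ρ ^ ((2:ℝ)/lam))) ≥
      (1 - σ * ρ ^ ((1:ℝ)/lam)) / (1 - ρ ^ ((1:ℝ)/lam)) *
        (1 / (1 + σ * ρ ^ ((2:ℝ)/lam) / (1 - σ * ρ ^ ((1:ℝ)/lam)))) ∧
    (σ = 0 →
      (1 - σ * ρ ^ ((1:ℝ)/lam)) /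
          ((1 - ρ ^ ((1:ℝ)/lam)) *
            (1 - σ * ρ ^ ((1:ℝ)/lam) + σ * ρ ^ ((2:ℝ)/lam))) =
        1 / (1 - ρ ^ ((1:ℝ)/lam))) ∧
    Tendsto (fun p : ℝ => 1 / (1 - p ^ ((1:ℝ)/lam)))
      (nhdsWithin 1 (Set.Iio 1)) atTop := by
  obtain ⟨hρ0, hρ1⟩ := hρ
  obtain ⟨hσ0, hσ1⟩ := hσ
  have hexp : 0 < (1:ℝ) / lam := one_div_pos.mpr hlam.1
  set r := ρ ^ ((1:ℝ)/lam)
  set s := ρ ^ ((2:ℝ)/lam)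
  have hr0 : 0 < r := rpow_pos_of_pos hρ0 _
  have hr1 : r < 1 := rpow_lt_one hρ0.le hρ1 hexp
  have hσr : 0 ≤ σ * r := mul_nonneg hσ0 hr0.le
  have hA : 0 < 1 - σ * r := by nlinarith
  have hB : 0 < 1 - σ * r + σ * s := by
    have : 0 ≤ σ * s := mul_nonneg hσ0 (rpow_pos_of_pos hρ0 _).le
    linarith
  refine ⟨?_, div_mul_one_div_one_add_div_le hσr hA hr1 hB, fun h ↦ by simp [h],
    tendsto_one_div_one_sub_rpow_nhdsLT_one hexp⟩
  rw [← div_div_mul_one_add_div_eq hℓ.ne' hA.ne']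
  refine tendsto_div_add_mul_div_nhdsGT_zero _ _ ?_
  rw [one_add_div hA.ne']
  positivity
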